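/- In a delegation game with a deterministic type profile, in the Nash equilibrium constructed by processing strongly connected components of each same-type subgraph bottom-up (each SCC delegating to its member maximizing q_i - e_i, or to a reachable already-processed agent with strictly higher inherited accuracy), every agent i satisfies q*_i(d) ≥ q_i - e_i ≥ 1/2, i.e., no agent is worse off than voting directly, and the profile contains no delegation cycles. -/

import Mathlib

open Classical in
noncomputable def detAcc {n : ℕ} (τ : Fin n → Fin 2) (q : Fin n → ℝ)
    (d : Fin n → Fin n) (i : Fin n) : ℝ :=
  if h : ∃ k, d (d^[k] i) = d^[k] i then
    if τ i = τ (d^[Nat.find h] i) then q (d^[Nat.find h] i) else 1 - q (d^[Nat.find h] i)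
  else 1/2

noncomputable def detUtil {n : ℕ} (τ : Fin n → Fin 2) (q e : Fin n → ℝ)
    (d : Fin n → Fin n) (i : Fin n) : ℝ :=
  if d i = i then q i - e i else detAcc τ q d i

/-!
Work in the same-type network. A set `G` of gurus is good if every agent can reach a guru it
weakly prefers to voting (`q i - e i ≤ q k`) and no guru can reach another guru it strictly
prefers (`q k' ≤ q k - e k`). The paper's bottom-up SCC procedure builds such a set: remove a
source component, solve the rest, and make the component's best member a guru unless it already
reaches a better one. Every agent is then routed, along shortest paths and without ever losing
its best reachable guru, to a guru maximizing `q` among those it can reach; so there are no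
cycles and each agent gets at least `q i - e i`. A deviation of `i` to `j` either closes a cycle
(payoff `1/2`), ends at a guru of the other type (payoff `≤ 1/2`), or ends at a guru `k ≠ i`
that `i` could already reach, which is worth at most `i`'s current payoff.
-/

open Function Relation Set

namespace Function

variable {α : Type*} {f : α → α} {x : α} {k m : ℕ}

lemma iterate_eq_of_isFixedPt (hk : IsFixedPt f (f^[k] x)) (hkm : k ≤ m) :
    f^[m] x = f^[k] x := by
  rw [← Nat.sub_add_cancel hkm, iterate_add_apply, iterate_fixed hk]

lemma IsPeriodicPt.isFixedPt_of_isFixedPt_iterate {p : ℕ} (hx : IsPeriodicPt f p x)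
    (hp : 0 < p) (hk : IsFixedPt f (f^[k] x)) : IsFixedPt f x := by
  have hxk : x = f^[k] x := calc
    x = f^[p * (k + 1)] x := (hx.mul_const (k + 1)).eq.symm
    _ = f^[k] x := iterate_eq_of_isFixedPt hk (by nlinarith)
  rwa [IsFixedPt, hxk]

lemma iterate_update_apply_eq [DecidableEq α] {i j : α} {t : ℕ} (h : ∀ s < t, f^[s] j ≠ i) :
    (update f i j)^[t] j = f^[t] j := by
  induction t with
  | zero => rfl
  | succ t ih =>
    rw [iterate_succ_apply', iterate_succ_apply', ih fun s hs => h s (by omega),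
      update_of_ne (h t (by omega))]

end Function

namespace DelegationGame

section Routing

variable {α : Type*} {r : α → α → Prop} {T : Set α}

variable (r T) in
def ReachesWithin : ℕ → α → Prop
  | 0, x => x ∈ T
  | m + 1, x => x ∈ T ∨ ∃ y, r x y ∧ ReachesWithin m y

lemma exists_reachesWithin {x t : α} (ht : t ∈ T) (hxt : ReflTransGen r x t) :
    ∃ m, ReachesWithin r T m x := by
  induction hxt using ReflTransGen.head_induction_on with
  | refl => exact ⟨0, ht⟩
  | head hxy _ ih =>
    obtain ⟨m, hm⟩ := ih
    exact ⟨m + 1, .inr ⟨_, hxy, hm⟩⟩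

/-- Shortest-path routing: off `T`, step to a neighbour strictly closer to `T`. -/
theorem exists_routing (hT : ∀ x, ∃ t ∈ T, ReflTransGen r x t) :
    ∃ d : α → α, (∀ x ∈ T, d x = x) ∧ (∀ x ∉ T, r x (d x)) ∧ ∀ x, ∃ m, d^[m] x ∈ T := by
  classical
  have hreach : ∀ x, ∃ m, ReachesWithin r T m x := fun x =>
    let ⟨_, ht, hxt⟩ := hT x
    exists_reachesWithin ht hxt
  have hstep : ∀ x ∉ T, ∃ y, r x y ∧ Nat.find (hreach y) < Nat.find (hreach x) := by
    intro x hx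
    have hspec := Nat.find_spec (hreach x)
    obtain ⟨m, hm⟩ : ∃ m, Nat.find (hreach x) = m + 1 :=
      Nat.exists_eq_succ_of_ne_zero fun h0 => hx (by rwa [h0] at hspec)
    rw [hm] at hspec
    obtain hxT | ⟨y, hxy, hy⟩ := hspec
    · exact absurd hxT hx
    · exact ⟨y, hxy, hm ▸ Nat.lt_succ_of_le (Nat.find_min' _ hy)⟩
  choose! next hnext hlt using hstep
  refine ⟨fun x => if x ∈ T then x else next x, fun x hx => if_pos hx,
    fun x hx => by simpa only [if_neg hx] using hnext x hx, fun x => ?_⟩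
  induction x using (measure fun x => Nat.find (hreach x)).wf.induction with
  | _ x ih =>
    by_cases hx : x ∈ T
    · exact ⟨0, hx⟩
    · obtain ⟨m, hm⟩ := ih (next x) (hlt x hx)
      exact ⟨m + 1, by rwa [iterate_succ_apply, if_neg hx]⟩

end Routing

section GuruSet

variable {α : Type*} {r : α → α → Prop} {q w : α → ℝ}

lemma exists_source (s : Finset α) (hs : s.Nonempty) :
    ∃ x ∈ s, ∀ y ∈ s, ReflTransGen r y x → ReflTransGen r x y := by
  obtain ⟨x, hx, hmin⟩ := s.exists_minimalFor (fun x => {y | ReflTransGen r y x}) hs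
  exact ⟨x, hx, fun y hy hyx => hmin hy (fun z hz => hz.trans hyx) ReflTransGen.refl⟩

variable (r q w) in
/-- `w x` is agent `x`'s payoff for voting directly, `q k` the payoff of delegating to guru `k`. -/
structure IsGuruSet (s G : Set α) : Prop where
  subset : G ⊆ s
  exists_guru : ∀ x ∈ s, ∃ k ∈ G, ReflTransGen r x k ∧ w x ≤ q k
  le_of_reflTransGen : ∀ k ∈ G, ∀ k' ∈ G, k' ≠ k → ReflTransGen r k k' → q k' ≤ w k

/-- `s \ t` is a source component of `s` with best member `b`; `b` becomes a guru unless it can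
reach a guru it strictly prefers. -/
lemma IsGuruSet.exists_of_source {s t G : Set α} {b : α} (hG : IsGuruSet r q w t G)
    (hwq : w b ≤ q b) (hb : b ∈ s) (hts : t ⊆ s)
    (htop : ∀ y ∈ s, y ∉ t → ReflTransGen r y b ∧ w y ≤ w b)
    (hnot : ∀ y ∈ t, ¬ReflTransGen r y b) : ∃ G', IsGuruSet r q w s G' := by
  by_cases hout : ∃ k ∈ G, ReflTransGen r b k ∧ w b < q k
  · obtain ⟨k, hkG, hbk, hwk⟩ := hout
    refine ⟨G, ⟨hG.subset.trans hts, fun x hx => ?_, hG.le_of_reflTransGen⟩⟩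
    by_cases hxt : x ∈ t
    · exact hG.exists_guru x hxt
    · obtain ⟨hxb, hwx⟩ := htop x hx hxt
      exact ⟨k, hkG, hxb.trans hbk, hwx.trans hwk.le⟩
  · push Not at hout
    refine ⟨insert b G, ⟨insert_subset hb (hG.subset.trans hts), fun x hx => ?_, ?_⟩⟩
    · by_cases hxt : x ∈ t
      · obtain ⟨k, hk, hxk, hwk⟩ := hG.exists_guru x hxt
        exact ⟨k, mem_insert_of_mem b hk, hxk, hwk⟩
      · obtain ⟨hxb, hwx⟩ := htop x hx hxt
        exact ⟨b, mem_insert b G, hxb, hwx.trans hwq⟩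
    · rintro k (rfl | hk) k' (rfl | hk') hne hkk'
      · exact absurd rfl hne
      · exact hout k' hk' hkk'
      · exact absurd hkk' (hnot k (hG.subset hk))
      · exact hG.le_of_reflTransGen k hk k' hk' hne hkk'

/-- The SCC procedure: peel off a source component and extend a guru set of the rest. -/
theorem exists_isGuruSet (hwq : ∀ x, w x ≤ q x) (s : Finset α)
    (hs : ∀ x ∈ s, ∀ y, ReflTransGen r x y → y ∈ s) : ∃ G, IsGuruSet r q w s G := by
  classical
  induction s using Finset.strongInduction with
  | H s ih =>
    rcases s.eq_empty_or_nonempty with rfl | hne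
    · exact ⟨∅, ⟨empty_subset _, by simp, by simp⟩⟩
    obtain ⟨x, hxs, hx⟩ := exists_source s hne
    obtain ⟨b, hbC, hb⟩ := (s.filter fun y => ReflTransGen r y x).exists_max_image w
      ⟨x, Finset.mem_filter.2 ⟨hxs, .refl⟩⟩
    obtain ⟨hbs, hbx⟩ := Finset.mem_filter.1 hbC
    let t := s.filter fun y => ¬ReflTransGen r y x
    have hts : t ⊂ s := Finset.filter_ssubset.2 ⟨x, hxs, not_not.2 .refl⟩
    have ht : ∀ y ∈ t, ∀ z, ReflTransGen r y z → z ∈ t := by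
      intro y hy z hyz
      obtain ⟨hys, hyx⟩ := Finset.mem_filter.1 hy
      exact Finset.mem_filter.2 ⟨hs y hys z hyz, fun hzx => hyx (hyz.trans hzx)⟩
    obtain ⟨G, hG⟩ := ih t hts ht
    refine hG.exists_of_source (hwq b) hbs (Finset.coe_subset.2 hts.subset) (fun y hy hyt => ?_)
      (fun y hy hyb => (Finset.mem_filter.1 hy).2 (hyb.trans hbx))
    have hyx : ReflTransGen r y x := not_not.1 fun hyx => hyt (Finset.mem_filter.2 ⟨hy, hyx⟩)
    exact ⟨hyx.trans (hx b hbs hbx), hb y (Finset.mem_filter.2 ⟨hy, hyx⟩)⟩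

end GuruSet

section BestGuru

variable {α : Type*} {r : α → α → Prop} {q w : α → ℝ} {G : Set α} {x k : α}

variable (r q G) in
def IsBestGuru (x k : α) : Prop :=
  k ∈ G ∧ ReflTransGen r x k ∧ ∀ k' ∈ G, ReflTransGen r x k' → q k' ≤ q k

variable (r q G) in
def KeepsBestGuru (x y : α) : Prop :=
  r x y ∧ ∀ k, IsBestGuru r q G y k → IsBestGuru r q G x k

lemma IsGuruSet.isBestGuru_self {s : Set α} (hG : IsGuruSet r q w s G) (hk : k ∈ G)
    (hwq : w k ≤ q k) : IsBestGuru r q G k k := by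
  refine ⟨hk, .refl, fun k' hk' hkk' => ?_⟩
  rcases eq_or_ne k' k with rfl | hne
  · exact le_rfl
  · exact (hG.le_of_reflTransGen k hk k' hk' hne hkk').trans hwq

lemma IsGuruSet.le_of_isBestGuru {s : Set α} (hG : IsGuruSet r q w s G) (hx : x ∈ s)
    (hk : IsBestGuru r q G x k) : w x ≤ q k := by
  obtain ⟨k', hk', hxk', hwk'⟩ := hG.exists_guru x hx
  exact hwk'.trans (hk.2.2 k' hk' hxk')

lemma exists_isBestGuru [Finite α] (hx : ∃ k ∈ G, ReflTransGen r x k) :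
    ∃ k, IsBestGuru r q G x k := by
  obtain ⟨k, ⟨hk, hxk⟩, hmax⟩ :=
    Set.exists_max_image {k | k ∈ G ∧ ReflTransGen r x k} q (toFinite _) hx
  exact ⟨k, hk, hxk, fun k' hk' hxk' => hmax k' ⟨hk', hxk'⟩⟩

lemma IsBestGuru.reflTransGen_keepsBestGuru (h : IsBestGuru r q G x k) :
    ReflTransGen (KeepsBestGuru r q G) x k := by
  obtain ⟨hk, hxk, hmax⟩ := h
  induction hxk using ReflTransGen.head_induction_on with
  | refl => exact .refl
  | @head x y hxy hyk ih =>
    have hkeep : KeepsBestGuru r q G x y := by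
      refine ⟨hxy, fun k' ⟨hk', hyk', hmax'⟩ => ⟨hk', .head hxy hyk', fun k'' hk'' hxk'' => ?_⟩⟩
      exact (hmax k'' hk'' hxk'').trans (hmax' k hk hyk)
    exact .head hkeep (ih fun k' hk' hyk' => hmax k' hk' (.head hxy hyk'))

lemma IsBestGuru.of_reflTransGen_keepsBestGuru {y : α}
    (h : ReflTransGen (KeepsBestGuru r q G) x y) (hy : IsBestGuru r q G y k) :
    IsBestGuru r q G x k := by
  induction h using ReflTransGen.head_induction_on with
  | refl => exact hy
  | head hxy _ ih => exact hxy.2 k ih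

lemma reflTransGen_iterate {f : α → α} (hf : ∀ x, f x = x ∨ r x (f x)) (x : α) (m : ℕ) :
    ReflTransGen r x (f^[m] x) := by
  induction m with
  | zero => exact .refl
  | succ m ih =>
    rw [iterate_succ_apply']
    rcases hf (f^[m] x) with h | h
    · rwa [h]
    · exact ih.tail h

variable (r q G) in
structure IsGuruDelegation (d : α → α) : Prop where
  eq_or_rel : ∀ x, d x = x ∨ r x (d x)
  isFixedPt_iff : ∀ x, IsFixedPt d x ↔ x ∈ G
  exists_isBestGuru : ∀ x, ∃ m, IsBestGuru r q G x (d^[m] x)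

theorem exists_isGuruDelegation [Finite α] (hG : IsGuruSet r q w univ G)
    (hwq : ∀ x, w x ≤ q x) : ∃ d, IsGuruDelegation r q G d := by
  have hbest : ∀ x, ∃ k, IsBestGuru r q G x k := fun x =>
    let ⟨k, hk, hxk, _⟩ := hG.exists_guru x (mem_univ x)
    exists_isBestGuru ⟨k, hk, hxk⟩
  obtain ⟨d, hfix, hstep, horbit⟩ := exists_routing (r := KeepsBestGuru r q G) (T := G) fun x =>
    let ⟨k, hk⟩ := hbest x
    ⟨k, hk.1, hk.reflTransGen_keepsBestGuru⟩
  have hkeep : ∀ x, d x = x ∨ KeepsBestGuru r q G x (d x) := fun x =>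
    (em (x ∈ G)).imp (hfix x) (hstep x)
  refine ⟨d, fun x => (hkeep x).imp_right And.left, fun x => ⟨fun hx => ?_, hfix x⟩, fun x => ?_⟩
  · obtain ⟨m, hm⟩ := horbit x
    rwa [iterate_fixed hx] at hm
  · obtain ⟨m, hm⟩ := horbit x
    exact ⟨m, (hG.isBestGuru_self hm (hwq _)).of_reflTransGen_keepsBestGuru
      (reflTransGen_iterate hkeep x m)⟩

end BestGuru

section Game

variable {n : ℕ} (τ : Fin n → Fin 2) (q : Fin n → ℝ) {d : Fin n → Fin n} {i j : Fin n}

lemma detAcc_eq_of_isFixedPt {m : ℕ} (h : IsFixedPt d (d^[m] i)) :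
    detAcc τ q d i = if τ i = τ (d^[m] i) then q (d^[m] i) else 1 - q (d^[m] i) := by
  have hex : ∃ k, d (d^[k] i) = d^[k] i := ⟨m, h⟩
  rw [detAcc, dif_pos hex, iterate_eq_of_isFixedPt (Nat.find_spec hex) (Nat.find_min' hex h)]

lemma detAcc_eq_half (h : ∀ k, ¬IsFixedPt d (d^[k] i)) : detAcc τ q d i = 1 / 2 := by
  rw [detAcc, dif_neg fun ⟨k, hk⟩ => h k hk]

lemma detAcc_update_of_iterate_eq (hji : j ≠ i) {t : ℕ} (ht : d^[t] j = i) :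
    detAcc τ q (update d i j) i = 1 / 2 := by
  have hex : ∃ t, d^[t] j = i := ⟨t, ht⟩
  have hper : IsPeriodicPt (update d i j) (Nat.find hex + 1) i := by
    rw [IsPeriodicPt, IsFixedPt, iterate_succ_apply, update_self,
      iterate_update_apply_eq fun s hs => Nat.find_min hex hs, Nat.find_spec hex]
  refine detAcc_eq_half τ q fun k hk => hji ?_
  simpa [IsFixedPt] using hper.isFixedPt_of_isFixedPt_iterate (Nat.succ_pos _) hk

lemma detAcc_update_of_forall_ne (hne : ∀ t, d^[t] j ≠ i) {m : ℕ}
    (hfix : IsFixedPt d (d^[m] j)) :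
    detAcc τ q (update d i j) i =
      if τ i = τ (d^[m] j) then q (d^[m] j) else 1 - q (d^[m] j) := by
  have hiter : (update d i j)^[m + 1] i = d^[m] j := by
    rw [iterate_succ_apply, update_self, iterate_update_apply_eq fun s _ => hne s]
  have hfix' : IsFixedPt (update d i j) ((update d i j)^[m + 1] i) := by
    rw [hiter, IsFixedPt, update_of_ne (hne m)]
    exact hfix
  rw [detAcc_eq_of_isFixedPt τ q hfix', hiter]

end Game

def sameTypeAdj {α β : Type*} (R : α → α → Prop) (τ : α → β) (i j : α) : Prop :=
  R i j ∧ τ i = τ j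

lemma type_eq_of_reflTransGen_sameTypeAdj {α β : Type*} {R : α → α → Prop} {τ : α → β}
    {i j : α} (h : ReflTransGen (sameTypeAdj R τ) i j) : τ i = τ j := by
  induction h with
  | refl => rfl
  | tail _ hjk ih => exact ih.trans hjk.2

section Equilibrium

variable {n : ℕ} {R : Fin n → Fin n → Prop} {τ : Fin n → Fin 2} {q e : Fin n → ℝ}
  {G : Set (Fin n)} {d : Fin n → Fin n} {i j : Fin n}

lemma IsGuruDelegation.exists_detAcc_eq (hd : IsGuruDelegation (sameTypeAdj R τ) q G d)
    (i : Fin n) : ∃ k, IsBestGuru (sameTypeAdj R τ) q G i k ∧ detAcc τ q d i = q k := by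
  obtain ⟨m, hm⟩ := hd.exists_isBestGuru i
  refine ⟨_, hm, ?_⟩
  rw [detAcc_eq_of_isFixedPt τ q ((hd.isFixedPt_iff _).2 hm.1),
    if_pos (type_eq_of_reflTransGen_sameTypeAdj hm.2.1)]

lemma sub_le_detAcc
    (hG : IsGuruSet (sameTypeAdj R τ) q (fun i => q i - e i) univ G)
    (hd : IsGuruDelegation (sameTypeAdj R τ) q G d) (i : Fin n) :
    q i - e i ≤ detAcc τ q d i := by
  obtain ⟨k, hk, hacc⟩ := hd.exists_detAcc_eq i
  rw [hacc]
  exact hG.le_of_isBestGuru (mem_univ i) hk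

lemma sub_le_detUtil
    (hG : IsGuruSet (sameTypeAdj R τ) q (fun i => q i - e i) univ G)
    (hd : IsGuruDelegation (sameTypeAdj R τ) q G d) (i : Fin n) :
    q i - e i ≤ detUtil τ q e d i := by
  unfold detUtil
  split_ifs
  · exact le_rfl
  · exact sub_le_detAcc hG hd i

lemma le_detUtil_of_reflTransGen
    (hG : IsGuruSet (sameTypeAdj R τ) q (fun i => q i - e i) univ G)
    (hd : IsGuruDelegation (sameTypeAdj R τ) q G d) {k : Fin n} (hk : k ∈ G) (hki : k ≠ i)
    (hik : ReflTransGen (sameTypeAdj R τ) i k) : q k ≤ detUtil τ q e d i := by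
  unfold detUtil
  split_ifs with hdi
  · exact hG.le_of_reflTransGen i ((hd.isFixedPt_iff i).1 hdi) k hk hki hik
  · obtain ⟨k', hk', hacc⟩ := hd.exists_detAcc_eq i
    rw [hacc]
    exact hk'.2.2 k hk hik

lemma detUtil_update_le
    (hG : IsGuruSet (sameTypeAdj R τ) q (fun i => q i - e i) univ G)
    (hd : IsGuruDelegation (sameTypeAdj R τ) q G d)
    (hqe : ∀ i, 1 / 2 ≤ q i - e i) (hj : j = i ∨ R i j) :
    detUtil τ q e (update d i j) i ≤ detUtil τ q e d i := by
  rcases eq_or_ne j i with rfl | hji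
  · rw [detUtil, if_pos (update_self j j d)]
    exact sub_le_detUtil hG hd j
  have hR : R i j := hj.resolve_left hji
  have half_le : 1 / 2 ≤ detUtil τ q e d i := (hqe i).trans (sub_le_detUtil hG hd i)
  rw [detUtil, if_neg (by rwa [update_self])]
  by_cases hcyc : ∃ t, d^[t] j = i
  · obtain ⟨t, ht⟩ := hcyc
    rw [detAcc_update_of_iterate_eq τ q hji ht]
    exact half_le
  push Not at hcyc
  obtain ⟨m, hm⟩ := hd.exists_isBestGuru j
  rw [detAcc_update_of_forall_ne τ q hcyc ((hd.isFixedPt_iff _).2 hm.1),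
    ← type_eq_of_reflTransGen_sameTypeAdj hm.2.1]
  split_ifs with hτ
  · exact le_detUtil_of_reflTransGen hG hd hm.1 (hcyc m) (.head ⟨hR, hτ⟩ hm.2.1)
  · have := (hqe j).trans (hG.le_of_isBestGuru (mem_univ j) hm)
    linarith

end Equilibrium

end DelegationGame

open DelegationGame

theorem det_delegation_game_good_NE_general (n : ℕ) (R : Fin n → Fin n → Prop)
    (τ : Fin n → Fin 2) (q e : Fin n → ℝ)
    (he : ∀ i, 0 ≤ e i) (hqe : ∀ i, 1/2 ≤ q i - e i) :
    ∃ d : Fin n → Fin n,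
      (∀ i, d i = i ∨ R i (d i)) ∧
      (∀ i j, (j = i ∨ R i j) →
        detUtil τ q e (Function.update d i j) i ≤ detUtil τ q e d i) ∧
      (∀ i, ∃ k, d (d^[k] i) = d^[k] i) ∧
      (∀ i, 1/2 ≤ q i - e i ∧ q i - e i ≤ detAcc τ q d i) := by
  have hwq : ∀ i, q i - e i ≤ q i := fun i => sub_le_self _ (he i)
  obtain ⟨G, hG⟩ := exists_isGuruSet (r := sameTypeAdj R τ) hwq Finset.univ
    fun _ _ _ _ => Finset.mem_univ _
  rw [Finset.coe_univ] at hG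
  obtain ⟨d, hd⟩ := exists_isGuruDelegation hG hwq
  refine ⟨d, fun i => (hd.eq_or_rel i).imp_right And.left,
    fun i j hj => detUtil_update_le hG hd hqe hj, fun i => ?_,
    fun i => ⟨hqe i, sub_le_detAcc hG hd i⟩⟩
  obtain ⟨m, hm⟩ := hd.exists_isBestGuru i
  exact ⟨m, (hd.isFixedPt_iff _).2 hm.1⟩

/-- In a delegation game with deterministic types, there is a pure Nash equilibrium
(the one built bottom-up over strongly connected components) in which every agent's
inherited accuracy is at least `q_i - e_i ≥ 1/2` (so no agent is worse off than voting
directly) and no agent's delegation path ends in a cycle. -/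
theorem det_delegation_game_good_NE (n : ℕ) (R : Fin n → Fin n → Prop)
    (τ : Fin n → Fin 2) (q e : Fin n → ℝ)
    (hq : ∀ i, q i ≤ 1) (he : ∀ i, 0 ≤ e i) (hqe : ∀ i, 1/2 ≤ q i - e i) :
    ∃ d : Fin n → Fin n,
      (∀ i, d i = i ∨ R i (d i)) ∧
      (∀ i j, (j = i ∨ R i j) →
        detUtil τ q e (Function.update d i j) i ≤ detUtil τ q e d i) ∧
      (∀ i, ∃ k, d (d^[k] i) = d^[k] i) ∧
      (∀ i, 1/2 ≤ q i - e i ∧ q i - e i ≤ detAcc τ q d i) :=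
  det_delegation_game_good_NE_general n R τ q e he hqe
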